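/- Let $\{Q_j\}_{j\in\Gamma}$ be a pairwise disjoint family of dyadic cubes in $\mathbb{R}^n$ and suppose $\mu < |E\cap Q_j^+|/|Q_j| \le 2\mu$ for all $j\in\Gamma$, where $E$ is a measurable set and $\mu>0$. Define $i_m$ as the set of $j\in\Gamma$ such that exactly $m$ indices $s\in\Gamma$ satisfy $Q_j^+\subsetneq Q_s^+$, and $F_m=\bigcup_{j\in i_m}(E\cap Q_j^+)$. Then for every $m_0$ and every $j_0\in i_{m_0}$, one has $|F_{m_0+2^{n+2}}\cap Q_{j_0}^+| < |E\cap Q_{j_0}^+|/2$, and consequently $|Q_{j_0}^+ \setminus F_{m_0+2^{n+2}}| > (\mu/2)|Q_{j_0}|$. -/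

import Mathlib

open MeasureTheory Set ENNReal

noncomputable section

/-- The half-open cube `∏ᵢ [aᵢ, aᵢ + h)` in `ℝⁿ`. -/
def cube {n : ℕ} (a : Fin n → ℝ) (h : ℝ) : Set (Fin n → ℝ) :=
  Set.univ.pi fun i => Set.Ico (a i) (a i + h)

/-- The forward adjacent cube `Q⁺ = ∏ᵢ [aᵢ + h, aᵢ + 2h)`. -/
def cubePlus {n : ℕ} (a : Fin n → ℝ) (h : ℝ) : Set (Fin n → ℝ) :=
  Set.univ.pi fun i => Set.Ico (a i + h) (a i + 2 * h)

/-- The dyadic cube with corner `m * 2^k` and side `2^k`. -/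
def dyCube {n : ℕ} (k : ℤ) (m : Fin n → ℤ) : Set (Fin n → ℝ) :=
  cube (fun i => (m i : ℝ) * 2 ^ k) (2 ^ k)

/-- The forward adjacent cube of a dyadic cube. -/
def dyCubePlus {n : ℕ} (k : ℤ) (m : Fin n → ℤ) : Set (Fin n → ℝ) :=
  cubePlus (fun i => (m i : ℝ) * 2 ^ k) (2 ^ k)

/-- The dyadic one-sided maximal function of the characteristic function of `E`:
`M^{+,d}(χ_E)(x) = sup { |E ∩ Q⁺| / |Q| : Q dyadic cube containing x }`. -/
def Mplusd {n : ℕ} (E : Set (Fin n → ℝ)) (x : Fin n → ℝ) : ℝ≥0∞ :=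
  ⨆ (k : ℤ) (m : Fin n → ℤ) (_ : x ∈ dyCube k m),
    volume (E ∩ dyCubePlus k m) / volume (dyCube k m)

/-!
Any two dyadic cubes are nested or disjoint, and distinct indices give distinct cubes `Q_j⁺`
because the `Q_j` are disjoint; so the strict supercubes `Q_s⁺ ⊋ Q_j⁺` form a chain, and if
there are `M` of them they realise every level `0, …, M - 1`. Hence, with
`M = m₀ + 2^{n+2}`, every point of `F_M ∩ Q_{j₀}⁺` lies, for each of the `2^{n+2}` levels
`m ∈ (m₀, M]`, in some `E ∩ Q_s⁺` with `s ∈ i_m` and `Q_s⁺ ⊆ Q_{j₀}⁺`. All these `Q_s` are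
disjoint and lie in the cube of side `2ℓ(Q_{j₀})` with the same corner as `Q_{j₀}`, so summing
`|E ∩ Q_s⁺| ≤ 2μ|Q_s|` over them gives `2^{n+2} |F_M ∩ Q_{j₀}⁺| ≤ 2μ 2ⁿ |Q_{j₀}|`, that is
`|F_M ∩ Q_{j₀}⁺| ≤ (μ/2)|Q_{j₀}| < |E ∩ Q_{j₀}⁺|/2`.
-/

lemma cubePlus_eq_cube {n : ℕ} (a : Fin n → ℝ) (h : ℝ) :
    cubePlus a h = cube (fun i => a i + h) h := by
  simp only [cubePlus, cube, add_assoc, ← two_mul]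

lemma volume_cube {n : ℕ} (a : Fin n → ℝ) (h : ℝ) :
    volume (cube a h) = ENNReal.ofReal h ^ n := by
  simp [cube, Real.volume_pi_Ico]

lemma volume_cube_two_mul {n : ℕ} (a : Fin n → ℝ) (h : ℝ) :
    volume (cube a (2 * h)) = 2 ^ n * volume (cube a h) := by
  rw [volume_cube, volume_cube, ENNReal.ofReal_mul zero_le_two, ENNReal.ofReal_ofNat, mul_pow]

lemma measurableSet_cube {n : ℕ} (a : Fin n → ℝ) (h : ℝ) : MeasurableSet (cube a h) :=
  MeasurableSet.univ_pi fun _ => measurableSet_Ico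

lemma cube_nonempty {n : ℕ} (a : Fin n → ℝ) {h : ℝ} (hh : 0 < h) : (cube a h).Nonempty :=
  univ_pi_nonempty_iff.2 fun i => nonempty_Ico.2 (by linarith)

lemma eq_and_eq_of_cube_eq_cube {n : ℕ} (hn : 0 < n) {a b : Fin n → ℝ} {h h' : ℝ}
    (hh : 0 < h) (heq : cube a h = cube b h') : a = b ∧ h = h' := by
  have hne := cube_nonempty a hh
  have hIco (i : Fin n) : a i = b i ∧ a i + h = b i + h' := by
    rw [← Ico_eq_Ico_iff (Or.inl (by linarith)),
      ← eval_image_univ_pi (t := fun i => Ico (a i) (a i + h)) hne,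
      ← eval_image_univ_pi (t := fun i => Ico (b i) (b i + h'))
        (by rw [← cube, ← heq]; exact hne)]
    exact congrArg _ heq
  have h0 := hIco ⟨0, hn⟩
  exact ⟨funext fun i => (hIco i).1, by linarith⟩

lemma cube_eq_cube_of_cubePlus_eq_cubePlus {n : ℕ} {a b : Fin n → ℝ} {h h' : ℝ}
    (hh : 0 < h) (hP : cubePlus a h = cubePlus b h') : cube a h = cube b h' := by
  rcases Nat.eq_zero_or_pos n with rfl | hn
  · ext x; simp [cube]
  · rw [cubePlus_eq_cube, cubePlus_eq_cube] at hP
    obtain ⟨hab, rfl⟩ := eq_and_eq_of_cube_eq_cube hn hh hP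
    have : a = b := funext fun i => by simpa using congrFun hab i
    rw [this]

lemma cube_subset_cube_two_mul_of_cubePlus_subset {n : ℕ} {a b : Fin n → ℝ} {h h' : ℝ}
    (hh' : 0 < h') (hsub : cubePlus b h' ⊆ cubePlus a h) : cube b h' ⊆ cube a (2 * h) := by
  rw [cubePlus, cubePlus, univ_pi_subset_univ_pi_iff] at hsub
  have hIco := hsub.resolve_right fun ⟨i, hi⟩ => (nonempty_Ico.2 (by linarith)).ne_empty hi
  refine pi_mono fun i _ => ?_
  have := (Ico_subset_Ico_iff (by linarith)).1 (hIco i)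
  exact Ico_subset_Ico (by linarith) (by linarith)

lemma two_zpow_pos (k : ℤ) : (0 : ℝ) < 2 ^ k := by positivity

lemma volume_dyCube_ne_zero {n : ℕ} {k : ℤ} {m : Fin n → ℤ} :
    volume (dyCube k m) ≠ 0 := by
  rw [dyCube, volume_cube]
  exact pow_ne_zero _ (ENNReal.ofReal_pos.2 (two_zpow_pos k)).ne'

lemma volume_dyCube_ne_top {n : ℕ} {k : ℤ} {m : Fin n → ℤ} :
    volume (dyCube k m) ≠ ⊤ := by
  rw [dyCube, volume_cube]
  exact ENNReal.pow_ne_top ENNReal.ofReal_ne_top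

lemma dyCubePlus_eq_dyCube {n : ℕ} (k : ℤ) (m : Fin n → ℤ) :
    dyCubePlus k m = dyCube k (fun i => m i + 1) := by
  simp only [dyCubePlus, dyCube, cubePlus_eq_cube, Int.cast_add, Int.cast_one, add_one_mul]

lemma mem_dyCube_iff_floor {n : ℕ} {k : ℤ} {m : Fin n → ℤ} {x : Fin n → ℝ} :
    x ∈ dyCube k m ↔ ∀ i, ⌊x i / 2 ^ k⌋ = m i := by
  have h2k : (0 : ℝ) < 2 ^ k := two_zpow_pos k
  simp only [dyCube, cube, mem_univ_pi, mem_Ico, Int.floor_eq_iff, le_div_iff₀ h2k,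
    div_lt_iff₀ h2k, add_one_mul]

lemma floor_div_two_zpow_add (y : ℝ) (k : ℤ) (d : ℕ) :
    ⌊y / 2 ^ (k + d)⌋ = ⌊y / 2 ^ k⌋ / 2 ^ d := by
  rw [zpow_add₀ two_ne_zero, zpow_natCast, ← div_div,
    show (2 : ℝ) ^ d = ((2 ^ d : ℕ) : ℝ) by push_cast; rfl, Int.floor_div_natCast]
  push_cast; rfl

lemma dyCube_subset_dyCube_of_le {n : ℕ} {k k' : ℤ} {m m' : Fin n → ℤ} (hk : k ≤ k')
    {x : Fin n → ℝ} (hx : x ∈ dyCube k m) (hx' : x ∈ dyCube k' m') :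
    dyCube k m ⊆ dyCube k' m' := by
  obtain ⟨d, rfl⟩ : ∃ d : ℕ, k' = k + d := ⟨(k' - k).toNat, by omega⟩
  intro y hy
  rw [mem_dyCube_iff_floor] at hx hx' hy ⊢
  intro i
  rw [floor_div_two_zpow_add, hy i, ← hx' i, floor_div_two_zpow_add, hx i]

lemma dyCube_subset_or_subset {n : ℕ} {k k' : ℤ} {m m' : Fin n → ℤ}
    (hne : (dyCube k m ∩ dyCube k' m').Nonempty) :
    dyCube k m ⊆ dyCube k' m' ∨ dyCube k' m' ⊆ dyCube k m := by
  obtain ⟨x, hx, hx'⟩ := hne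
  rcases le_total k k' with hk | hk
  · exact .inl (dyCube_subset_dyCube_of_le hk hx hx')
  · exact .inr (dyCube_subset_dyCube_of_le hk hx' hx)

section StrictOrder

variable {ι : Type*} (r : ι → ι → Prop) [IsTrans ι r] [Std.Irrefl r]

lemma setOf_rel_ssubset_setOf_rel {s t : ι} (hst : r s t) : {u | r t u} ⊂ {u | r s u} :=
  ⟨fun _ hu => _root_.trans hst hu, fun h => irrefl t (h hst)⟩

lemma ncard_setOf_rel_lt {s t : ι} (hfin : {u | r s u}.Finite) (hst : r s t) :
    {u | r t u}.ncard < {u | r s u}.ncard :=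
  ncard_lt_ncard (setOf_rel_ssubset_setOf_rel r hst) hfin

lemma exists_rel_ncard_setOf_rel_eq {j : ι} (hfin : {u | r j u}.Finite)
    (hchain : IsChain r {u | r j u}) {m : ℕ} (hm : m < {u | r j u}.ncard) :
    ∃ s, r j s ∧ {u | r s u}.ncard = m := by
  set c : ι → ℕ := fun s => {u | r s u}.ncard
  have hfin' {s : ι} (hs : r j s) : {u | r s u}.Finite :=
    hfin.subset (setOf_rel_ssubset_setOf_rel r hs).subset
  have hinj : InjOn c {u | r j u} := by
    intro s hs t ht hst
    by_contra hne
    rcases hchain hs ht hne with h | h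
    · exact (ncard_setOf_rel_lt r (hfin' hs) h).ne' hst
    · exact (ncard_setOf_rel_lt r (hfin' ht) h).ne hst
  have hsub : c '' {u | r j u} ⊆ Iio {u | r j u}.ncard := by
    rintro _ ⟨s, hs, rfl⟩
    exact ncard_setOf_rel_lt r hfin hs
  have himage : c '' {u | r j u} = Iio {u | r j u}.ncard :=
    eq_of_subset_of_ncard_le hsub (by rw [hinj.ncard_image, ncard_Iio_nat]) (finite_Iio _)
  obtain ⟨s, hs, hcs⟩ : m ∈ c '' {u | r j u} := himage ▸ hm
  exact ⟨s, hs, hcs⟩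

lemma exists_rel_between {j j₀ : ι} (hfin : {u | r j u}.Finite)
    (hchain : IsChain r {u | r j u}) (hj₀ : r j j₀) {m : ℕ}
    (hm₀ : {u | r j₀ u}.ncard < m) (hm : m < {u | r j u}.ncard) :
    ∃ s, r j s ∧ r s j₀ ∧ {u | r s u}.ncard = m := by
  obtain ⟨s, hjs, rfl⟩ := exists_rel_ncard_setOf_rel_eq r hfin hchain hm
  refine ⟨s, hjs, ?_, rfl⟩
  have hs₀ : s ≠ j₀ := by rintro rfl; exact hm₀.false
  refine (hchain hjs hj₀ hs₀).resolve_right fun hj₀s => ?_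
  have hfin₀ := hfin.subset (setOf_rel_ssubset_setOf_rel r hj₀).subset
  exact (ncard_setOf_rel_lt r hfin₀ hj₀s).not_gt hm₀

end StrictOrder

def IsLaminar {ι α : Type*} (P : ι → Set α) : Prop :=
  ∀ s t, (P s ∩ P t).Nonempty → P s ⊆ P t ∨ P t ⊆ P s

namespace IsLaminar

variable {ι α : Type*} {P : ι → Set α} (hP : IsLaminar P) (hinj : Function.Injective P)
include hP hinj

lemma isChain_setOf_ssubset {j : ι} (hj : (P j).Nonempty) :
    IsChain (InvImage (· ⊂ · : Set α → Set α → Prop) P) {u | P j ⊂ P u} := by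
  intro s (hs : P j ⊂ P s) t (ht : P j ⊂ P t) hst
  obtain ⟨x, hx⟩ := hj
  refine (hP s t ⟨x, hs.subset hx, ht.subset hx⟩).imp (fun h => ?_) (fun h => ?_)
  · exact h.ssubset_of_ne (hinj.ne hst)
  · exact h.ssubset_of_ne (hinj.ne hst.symm)

lemma ssubset_of_ncard_lt {j j₀ : ι} (hmeet : (P j ∩ P j₀).Nonempty)
    (hfin₀ : {u | P j₀ ⊂ P u}.Finite)
    (hlt : {u | P j₀ ⊂ P u}.ncard < {u | P j ⊂ P u}.ncard) :
    P j ⊂ P j₀ := by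
  have hne : j ≠ j₀ := by rintro rfl; exact hlt.false
  refine (hP j j₀ hmeet).elim (fun h => h.ssubset_of_ne (hinj.ne hne)) fun h => ?_
  exact absurd hlt (ncard_setOf_rel_lt (InvImage (· ⊂ · : Set α → Set α → Prop) P) hfin₀
    (h.ssubset_of_ne (hinj.ne hne.symm))).not_gt

lemma exists_ncard_eq_of_mem_inter {j j₀ : ι} {x : α} (hx : x ∈ P j ∩ P j₀)
    (hfin : {u | P j ⊂ P u}.Finite) (hfin₀ : {u | P j₀ ⊂ P u}.Finite) {m : ℕ}
    (hm₀ : {u | P j₀ ⊂ P u}.ncard < m) (hm : m ≤ {u | P j ⊂ P u}.ncard) :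
    ∃ s, {u | P s ⊂ P u}.Finite ∧ {u | P s ⊂ P u}.ncard = m ∧
      P s ⊆ P j₀ ∧ x ∈ P s := by
  have hj₀ := hP.ssubset_of_ncard_lt hinj ⟨x, hx⟩ hfin₀ (hm₀.trans_le hm)
  rcases hm.eq_or_lt with rfl | hm
  · exact ⟨j, hfin, rfl, hj₀.subset, hx.1⟩
  let r := InvImage (· ⊂ · : Set α → Set α → Prop) P
  obtain ⟨s, hjs, hs₀, hs⟩ :=
    exists_rel_between r hfin (hP.isChain_setOf_ssubset hinj ⟨x, hx.1⟩) hj₀ hm₀ hm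
  exact ⟨s, hfin.subset (setOf_rel_ssubset_setOf_rel r hjs).subset, hs, hs₀.subset,
    hjs.subset hx.1⟩

end IsLaminar

section DyadicFamily

variable {n : ℕ} {ι : Type*} (k : ι → ℤ) (a : ι → Fin n → ℤ)

lemma isLaminar_dyCubePlus : IsLaminar fun j => dyCubePlus (k j) (a j) := by
  intro s t hst
  simp only [dyCubePlus_eq_dyCube] at hst ⊢
  exact dyCube_subset_or_subset hst

lemma injective_dyCubePlus
    (hdisj : Pairwise fun i j => Disjoint (dyCube (k i) (a i)) (dyCube (k j) (a j))) :
    Function.Injective fun j => dyCubePlus (k j) (a j) := by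
  intro s t hst
  by_contra hne
  have hQ : dyCube (k s) (a s) = dyCube (k t) (a t) :=
    cube_eq_cube_of_cubePlus_eq_cubePlus (two_zpow_pos _) hst
  obtain ⟨x, hx⟩ := cube_nonempty _ (two_zpow_pos (k s))
  exact disjoint_left.1 (hdisj hne) hx (hQ ▸ hx)

end DyadicFamily

lemma measure_biUnion_le_mul_measure_biUnion {α ι : Type*} [MeasurableSpace α]
    (ν : Measure α) [Countable ι] {T : Set ι} {A B : ι → Set α} {c : ℝ≥0∞}
    (hAB : ∀ s ∈ T, ν (A s) ≤ c * ν (B s)) (hdisj : T.PairwiseDisjoint B)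
    (hmeas : ∀ s ∈ T, MeasurableSet (B s)) :
    ν (⋃ s ∈ T, A s) ≤ c * ν (⋃ s ∈ T, B s) := calc
  _ ≤ ∑' s : T, ν (A s) := measure_biUnion_le ν T.to_countable _
  _ ≤ ∑' s : T, c * ν (B s) := ENNReal.tsum_le_tsum fun s => hAB s s.2
  _ = c * ν (⋃ s ∈ T, B s) := by
    rw [ENNReal.tsum_mul_left, measure_biUnion T.to_countable hdisj hmeas]

lemma card_mul_measure_le_of_forall_subset_biUnion {α ι β : Type*} [MeasurableSpace α]
    (ν : Measure α) [Countable ι] {R : Finset β} {T : β → Set ι}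
    (hT : (R : Set β).PairwiseDisjoint T) {A W : Set α} {G B : ι → Set α} {c : ℝ≥0∞}
    (hcover : ∀ m ∈ R, A ⊆ ⋃ s ∈ T m, G s)
    (hGB : ∀ m ∈ R, ∀ s ∈ T m, ν (G s) ≤ c * ν (B s))
    (hB : Pairwise fun s t => Disjoint (B s) (B t)) (hBmeas : ∀ s, MeasurableSet (B s))
    (hBW : ∀ m ∈ R, ∀ s ∈ T m, B s ⊆ W) :
    R.card * ν A ≤ c * ν W := by
  have hdisj : (R : Set β).PairwiseDisjoint fun m => ⋃ s ∈ T m, B s := by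
    intro m hm m' hm' hne
    simp only [Function.onFun, disjoint_iUnion_left, disjoint_iUnion_right]
    exact fun t ht s hs => hB ((hT hm hm' hne).ne_of_mem hs ht)
  calc R.card * ν A = ∑ m ∈ R, ν A := by simp
    _ ≤ ∑ m ∈ R, ν (⋃ s ∈ T m, G s) :=
        Finset.sum_le_sum fun m hm => measure_mono (hcover m hm)
    _ ≤ ∑ m ∈ R, c * ν (⋃ s ∈ T m, B s) := Finset.sum_le_sum fun m hm =>
        measure_biUnion_le_mul_measure_biUnion ν (hGB m hm) (hB.set_pairwise _)
          fun s _ => hBmeas s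
    _ = c * ν (⋃ m ∈ R, ⋃ s ∈ T m, B s) := by
        rw [← Finset.mul_sum, measure_biUnion_finset hdisj fun m _ =>
          MeasurableSet.biUnion (T m).to_countable fun s _ => hBmeas s]
    _ ≤ c * ν W := by
        gcongr
        exact iUnion₂_subset fun m hm => iUnion₂_subset (hBW m hm)

lemma measure_inter_lt_half_and_lt_measure_diff {α : Type*} [MeasurableSpace α]
    (ν : Measure α) {E P F : Set α} {x : ℝ≥0∞} (hlow : x + x < ν (E ∩ P))
    (hF : ν (F ∩ P) ≤ x) : ν (F ∩ P) < ν (E ∩ P) / 2 ∧ x < ν (P \ F) := by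
  have hx : x < ν (E ∩ P) / 2 := by
    rwa [ENNReal.lt_div_iff_mul_lt (by simp) (by simp), mul_two]
  refine ⟨hF.trans_lt hx, (ENNReal.add_lt_add_iff_right hx.ne_top).1 ?_⟩
  calc x + x < ν (E ∩ P) := hlow
    _ ≤ ν (P \ F ∪ F ∩ P) := measure_mono fun y ⟨_, hy⟩ => by
        by_cases hyF : y ∈ F
        · exact .inr ⟨hyF, hy⟩
        · exact .inl ⟨hy, hyF⟩
    _ ≤ ν (P \ F) + ν (F ∩ P) := measure_union_le _ _
    _ ≤ ν (P \ F) + x := by gcongr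

lemma le_div_two_mul_of_two_pow_mul_le {y z q : ℝ≥0∞} (n : ℕ)
    (h : 2 ^ (n + 2) * y ≤ 2 * z * (2 ^ n * q)) : y ≤ z / 2 * q := by
  rw [← ENNReal.mul_div_right_comm, ENNReal.le_div_iff_mul_le (by simp) (by simp)]
  refine (ENNReal.mul_le_mul_iff_right (a := 2 ^ n * 2) (by simp)
    (ENNReal.mul_ne_top (ENNReal.pow_ne_top ENNReal.ofNat_ne_top) ENNReal.ofNat_ne_top)).1 ?_
  calc 2 ^ n * 2 * (y * 2) = 2 ^ (n + 2) * y := by ring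
    _ ≤ 2 * z * (2 ^ n * q) := h
    _ = 2 ^ n * 2 * (z * q) := by ring

theorem Fm_small_on_Qj0plus_general {n : ℕ} (μ : ℝ)
    (E : Set (Fin n → ℝ))
    {ι : Type*} [Countable ι] (k : ι → ℤ) (a : ι → Fin n → ℤ)
    (hdisj : Pairwise fun i j => Disjoint (dyCube (k i) (a i)) (dyCube (k j) (a j)))
    (hlow : ∀ j, ENNReal.ofReal μ
      < volume (E ∩ dyCubePlus (k j) (a j)) / volume (dyCube (k j) (a j)))
    (hhigh : ∀ j, volume (E ∩ dyCubePlus (k j) (a j)) / volume (dyCube (k j) (a j))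
      ≤ 2 * ENNReal.ofReal μ)
    (im : ℕ → Set ι)
    (him : ∀ M j, j ∈ im M ↔
      ({s : ι | dyCubePlus (k j) (a j) ⊂ dyCubePlus (k s) (a s)}.Finite ∧
        {s : ι | dyCubePlus (k j) (a j) ⊂ dyCubePlus (k s) (a s)}.ncard = M))
    (F : ℕ → Set (Fin n → ℝ))
    (hF : ∀ M, F M = ⋃ j ∈ im M, E ∩ dyCubePlus (k j) (a j))
    (m₀ : ℕ) (j₀ : ι) (hj₀ : j₀ ∈ im m₀) :
    volume (F (m₀ + 2 ^ (n + 2)) ∩ dyCubePlus (k j₀) (a j₀))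
        < volume (E ∩ dyCubePlus (k j₀) (a j₀)) / 2 ∧
      ENNReal.ofReal μ / 2 * volume (dyCube (k j₀) (a j₀))
        < volume (dyCubePlus (k j₀) (a j₀) \ F (m₀ + 2 ^ (n + 2))) := by
  set M := m₀ + 2 ^ (n + 2)
  obtain ⟨hfin₀, hcard₀⟩ := (him m₀ j₀).1 hj₀
  have hcover : ∀ m ∈ Finset.Ioc m₀ M, F M ∩ dyCubePlus (k j₀) (a j₀) ⊆
      ⋃ s ∈ {s | s ∈ im m ∧ dyCubePlus (k s) (a s) ⊆ dyCubePlus (k j₀) (a j₀)},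
        E ∩ dyCubePlus (k s) (a s) := by
    rintro m hm x ⟨hxF, hx₀⟩
    rw [hF, mem_iUnion₂] at hxF
    obtain ⟨j, hj, hxE, hx⟩ := hxF
    obtain ⟨hfin, hcard⟩ := (him M j).1 hj
    rw [Finset.mem_Ioc, ← hcard₀, ← hcard] at hm
    obtain ⟨s, hsfin, hs, hsj₀, hxs⟩ :=
      (isLaminar_dyCubePlus k a).exists_ncard_eq_of_mem_inter (injective_dyCubePlus k a hdisj)
        ⟨hx, hx₀⟩ hfin hfin₀ hm.1 hm.2
    exact mem_biUnion ⟨(him m s).2 ⟨hsfin, hs⟩, hsj₀⟩ ⟨hxE, hxs⟩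
  have hcount := card_mul_measure_le_of_forall_subset_biUnion volume
    (fun m _ m' _ hmm' => disjoint_left.2 fun s hs hs' =>
      hmm' (((him m s).1 hs.1).2.symm.trans ((him m' s).1 hs'.1).2)) hcover
    (fun m _ s _ => (ENNReal.div_le_iff volume_dyCube_ne_zero volume_dyCube_ne_top).1 (hhigh s))
    hdisj (fun s => measurableSet_cube _ _)
    (fun m _ s hs => cube_subset_cube_two_mul_of_cubePlus_subset (two_zpow_pos _) hs.2)
  rw [Nat.card_Ioc, Nat.add_sub_cancel_left, volume_cube_two_mul] at hcount
  refine measure_inter_lt_half_and_lt_measure_diff volume ?_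
    (le_div_two_mul_of_two_pow_mul_le n (by exact_mod_cast hcount))
  rw [← add_mul, ENNReal.add_halves]
  exact (ENNReal.lt_div_iff_mul_lt (.inl volume_dyCube_ne_zero) (.inl volume_dyCube_ne_top)).1
    (hlow j₀)

/-- With `i_m` as before and `F_m = ⋃_{j ∈ i_m} (E ∩ Q_j⁺)`, if
`μ < |E ∩ Q_j⁺|/|Q_j| ≤ 2μ` for all `j`, then for every `m₀` and `j₀ ∈ i_{m₀}`,
`|F_{m₀+2^{n+2}} ∩ Q_{j₀}⁺| < |E ∩ Q_{j₀}⁺|/2`, and consequently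
`|Q_{j₀}⁺ \ F_{m₀+2^{n+2}}| > (μ/2)|Q_{j₀}|`. -/
theorem Fm_small_on_Qj0plus {n : ℕ} (μ : ℝ) (hμ : 0 < μ)
    (E : Set (Fin n → ℝ)) (hE : MeasurableSet E)
    {ι : Type*} [Countable ι] (k : ι → ℤ) (a : ι → Fin n → ℤ)
    (hdisj : Pairwise fun i j => Disjoint (dyCube (k i) (a i)) (dyCube (k j) (a j)))
    (hlow : ∀ j, ENNReal.ofReal μ
      < volume (E ∩ dyCubePlus (k j) (a j)) / volume (dyCube (k j) (a j)))
    (hhigh : ∀ j, volume (E ∩ dyCubePlus (k j) (a j)) / volume (dyCube (k j) (a j))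
      ≤ 2 * ENNReal.ofReal μ)
    (im : ℕ → Set ι)
    (him : ∀ M j, j ∈ im M ↔
      ({s : ι | dyCubePlus (k j) (a j) ⊂ dyCubePlus (k s) (a s)}.Finite ∧
        {s : ι | dyCubePlus (k j) (a j) ⊂ dyCubePlus (k s) (a s)}.ncard = M))
    (F : ℕ → Set (Fin n → ℝ))
    (hF : ∀ M, F M = ⋃ j ∈ im M, E ∩ dyCubePlus (k j) (a j))
    (m₀ : ℕ) (j₀ : ι) (hj₀ : j₀ ∈ im m₀) :
    volume (F (m₀ + 2 ^ (n + 2)) ∩ dyCubePlus (k j₀) (a j₀))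
        < volume (E ∩ dyCubePlus (k j₀) (a j₀)) / 2 ∧
      ENNReal.ofReal μ / 2 * volume (dyCube (k j₀) (a j₀))
        < volume (dyCubePlus (k j₀) (a j₀) \ F (m₀ + 2 ^ (n + 2))) :=
  Fm_small_on_Qj0plus_general μ E k a hdisj hlow hhigh im him F hF m₀ j₀ hj₀

end
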